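/- arXiv:gr-qc/9807001 — 3 statements merged into one kernel-verified Lean document; each statement's English description precedes it below -/
import Mathlib

section
/- Let j : ℝ → ℝ be twice differentiable. If j''(r) − 2 = 0 and 2r² + r²·j''(r) − 4r·j'(r) + 4·j(r) = 0 hold for all r, then there exists a constant d₁ such that j(r) = r² + d₁·r for all r. -/
theorem eq_add_smul_of_deriv_eq_const {𝕜 E : Type*} [RCLike 𝕜] [NormedAddCommGroup E]
    [NormedSpace 𝕜 E] {f : 𝕜 → E} {a : E} (hf : Differentiable 𝕜 f) (hf' : ∀ x, deriv f x = a)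
    (x : 𝕜) : f x = f 0 + x • a := by
  have hderiv : ∀ y, deriv (fun y => f y - y • a) y = 0 := fun y => by
    rw [deriv_fun_sub (hf y) (by fun_prop), hf' y, deriv_smul_const (by fun_prop)]
    simp
  have := is_const_of_deriv_eq_zero (hf.sub (by fun_prop)) hderiv x 0
  simpa [sub_eq_iff_eq_add] using this

theorem stmt_1_general (j : ℝ → ℝ)
    (hj' : Differentiable ℝ (deriv j))
    (h1 : ∀ r : ℝ, deriv (deriv j) r - 2 = 0)
    (h2 : ∀ r : ℝ, 2 * r ^ 2 + r ^ 2 * deriv (deriv j) r - 4 * r * deriv j r + 4 * j r = 0) :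
    ∃ d₁ : ℝ, ∀ r : ℝ, j r = r ^ 2 + d₁ * r := by
  have hj'' : ∀ r, deriv (deriv j) r = 2 := fun r => sub_eq_zero.mp (h1 r)
  have hderiv : ∀ r, deriv j r = deriv j 0 + r * 2 :=
    eq_add_smul_of_deriv_eq_const hj' hj''
  refine ⟨deriv j 0, fun r => ?_⟩
  have h2r := h2 r
  rw [hj'' r, hderiv r] at h2r
  linear_combination h2r / 4

theorem stmt_1 (j : ℝ → ℝ) (hj : Differentiable ℝ j)
    (hj' : Differentiable ℝ (deriv j))
    (h1 : ∀ r : ℝ, deriv (deriv j) r - 2 = 0)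
    (h2 : ∀ r : ℝ, 2 * r ^ 2 + r ^ 2 * deriv (deriv j) r - 4 * r * deriv j r + 4 * j r = 0) :
    ∃ d₁ : ℝ, ∀ r : ℝ, j r = r ^ 2 + d₁ * r :=
  stmt_1_general j hj' h1 h2
end

section
/- Fix a ≠ 0 and a function k : ℝ → ℝ. The expression E(r,χ) = (2r − k'(r))·a⁴·χ⁴ + (2k(r) − k'(r)·r)·2·a·r·χ² − k'(r)·r⁴ + 2r·k(r)² (the numerator of the G_{rχ} Einstein tensor component, up to nonvanishing factors) vanishes for all r > 0 and all χ ∈ (−1,1) if and only if k(r) = r² for all r > 0. -/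
open Set

/-- As a quadratic in `t = χ²`, `A t² + B t + C` has the three roots `t = 0, 1/16, 1/4`. -/
theorem biquadratic_coeffs_eq_zero_of_forall_Ioo {A B C : ℝ}
    (h : ∀ χ ∈ Ioo (-1 : ℝ) 1, A * χ ^ 4 + B * χ ^ 2 + C = 0) :
    A = 0 ∧ B = 0 ∧ C = 0 := by
  have h₀ := h 0 ⟨by norm_num, by norm_num⟩
  have h₁ := h (1 / 4) ⟨by norm_num, by norm_num⟩
  have h₂ := h (1 / 2) ⟨by norm_num, by norm_num⟩
  refine ⟨?_, ?_, ?_⟩ <;> linarith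

theorem hasDerivAt_eq_two_mul_of_eq_sq_on_Ioi {k : ℝ → ℝ} {d r : ℝ} (hr : 0 < r)
    (hk : HasDerivAt k d r) (h : ∀ x > 0, k x = x ^ 2) : d = 2 * r := by
  have hsq : HasDerivAt k (2 * r) r := by
    refine (by simpa using hasDerivAt_pow 2 r : HasDerivAt (fun x : ℝ => x ^ 2) (2 * r) r)
      |>.congr_of_eventuallyEq ?_
    filter_upwards [Ioi_mem_nhds hr] with x hx using h x hx
  exact hk.unique hsq

theorem stmt_3 (a : ℝ) (ha : a ≠ 0) (k k' : ℝ → ℝ)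
    (hk : ∀ r > (0 : ℝ), HasDerivAt k (k' r) r) :
    (∀ r > (0 : ℝ), ∀ χ ∈ Set.Ioo (-1 : ℝ) 1,
        (2 * r - k' r) * a ^ 4 * χ ^ 4 + (2 * k r - k' r * r) * 2 * a * r * χ ^ 2
          - k' r * r ^ 4 + 2 * r * (k r) ^ 2 = 0)
      ↔ (∀ r > (0 : ℝ), k r = r ^ 2) := by
  constructor
  · intro h r hr
    obtain ⟨hA, hB, -⟩ := biquadratic_coeffs_eq_zero_of_forall_Ioo
      (A := (2 * r - k' r) * a ^ 4) (B := (2 * k r - k' r * r) * 2 * a * r)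
      (C := -k' r * r ^ 4 + 2 * r * k r ^ 2) fun χ hχ => by linear_combination h r hr χ hχ
    have hk' : 2 * r - k' r = 0 := (mul_eq_zero.mp hA).resolve_right (pow_ne_zero 4 ha)
    have hkr : 2 * k r - k' r * r = 0 := by
      simpa [ha, hr.ne'] using hB
    linear_combination hkr / 2 - r / 2 * hk'
  · intro h r hr χ _
    rw [hasDerivAt_eq_two_mul_of_eq_sq_on_Ioi hr (hk r hr) h, h r hr]
    ring
end

section
/- Define e^{2λ(r,χ)} = Σ/(j(r) + a²χ²) and e^{Φ(r,χ)} = √(Σ(j(r) + a²χ²))/(k(r) + a²χ²) with Σ = r² + a²χ². Then g(r) := −e^{λ}(Σ + a²(1−χ²)e^{λ+Φ})/(e^{Φ}(Σ + a²(1−χ²)e^{2λ})) simplifies to g(r) = −(k(r) + a²)/(j(r) + a²); in particular g is independent of χ. -/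
/-!
Write `S = u²` and `J = v²` with `u = √S`, `v = √J`, so that `e^λ = u / v` and
`e^Φ = u v / K` with `K = k(r) + a²χ²`. Numerator and denominator then both carry the factor
`u³ / (v K)`, leaving `-(K + A) / (J + A)` with `A = a²(1 - χ²)`; since `K + A = k(r) + a²` and
`J + A = j(r) + a²`, all dependence on `χ` cancels.
-/

lemma newmanJanis_g_eq_of_sq_eq {F : Type*} [Field F] {u v S J K A : F}
    (hu : u ≠ 0) (hv : v ≠ 0) (hK : K ≠ 0) (hJA : J + A ≠ 0)
    (huS : u ^ 2 = S) (hvJ : v ^ 2 = J) :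
    -(u / v) * (S + A * (u / v * (u * v / K))) / (u * v / K * (S + A * (u / v) ^ 2))
      = -(K + A) / (J + A) := by
  subst huS hvJ
  field_simp

theorem stmt_13_general (a r χ : ℝ) (j k : ℝ → ℝ)
    (hS : 0 < r ^ 2 + a ^ 2 * χ ^ 2)
    (hj : 0 < j r + a ^ 2 * χ ^ 2)
    (hk : k r + a ^ 2 * χ ^ 2 ≠ 0)
    (hja : j r + a ^ 2 ≠ 0) :
    let S : ℝ := r ^ 2 + a ^ 2 * χ ^ 2
    let eL : ℝ := Real.sqrt (S / (j r + a ^ 2 * χ ^ 2))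
    let eF : ℝ := Real.sqrt (S * (j r + a ^ 2 * χ ^ 2)) / (k r + a ^ 2 * χ ^ 2);
    -eL * (S + a ^ 2 * (1 - χ ^ 2) * (eL * eF)) / (eF * (S + a ^ 2 * (1 - χ ^ 2) * eL ^ 2))
      = -(k r + a ^ 2) / (j r + a ^ 2) := by
  intro S eL eF
  have heL : eL = √S / √(j r + a ^ 2 * χ ^ 2) := Real.sqrt_div hS.le _
  have heF : eF = √S * √(j r + a ^ 2 * χ ^ 2) / (k r + a ^ 2 * χ ^ 2) :=
    congrArg (· / _) (Real.sqrt_mul hS.le _)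
  have hKA : k r + a ^ 2 = (k r + a ^ 2 * χ ^ 2) + a ^ 2 * (1 - χ ^ 2) := by ring
  have hJA : j r + a ^ 2 = (j r + a ^ 2 * χ ^ 2) + a ^ 2 * (1 - χ ^ 2) := by ring
  rw [heL, heF, hKA, hJA]
  exact newmanJanis_g_eq_of_sq_eq (Real.sqrt_pos.mpr hS).ne' (Real.sqrt_pos.mpr hj).ne' hk
    (hJA ▸ hja) (Real.sq_sqrt hS.le) (Real.sq_sqrt hj.le)

theorem stmt_13 (a r χ : ℝ) (j k : ℝ → ℝ) (hχ : χ ∈ Set.Ioo (-1 : ℝ) 1)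
    (hS : 0 < r ^ 2 + a ^ 2 * χ ^ 2)
    (hj : 0 < j r + a ^ 2 * χ ^ 2)
    (hk : k r + a ^ 2 * χ ^ 2 ≠ 0)
    (hja : j r + a ^ 2 ≠ 0) :
    let S : ℝ := r ^ 2 + a ^ 2 * χ ^ 2
    let eL : ℝ := Real.sqrt (S / (j r + a ^ 2 * χ ^ 2))
    let eF : ℝ := Real.sqrt (S * (j r + a ^ 2 * χ ^ 2)) / (k r + a ^ 2 * χ ^ 2);
    -eL * (S + a ^ 2 * (1 - χ ^ 2) * (eL * eF)) / (eF * (S + a ^ 2 * (1 - χ ^ 2) * eL ^ 2))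
      = -(k r + a ^ 2) / (j r + a ^ 2) :=
  stmt_13_general a r χ j k hS hj hk hja
end
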